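/- arXiv:2505.17805 — 2 statements merged into one kernel-verified Lean document; each statement's English description precedes it below -/
import Mathlib

section
/- Let W be the Weyl group of a root system Φ. Then W is isomorphic to the abstract group generated by symbols ω_α for α ∈ Φ, subject to the relations ω_α² = 1 and ω_α ω_β ω_α⁻¹ = ω_{ω_α(β)} for all α, β ∈ Φ, where ω_α(β) = β − ⟨β,α⟩α. -/
/-!
Choose `f` with `⟪f, α⟫ ≠ 0` for every root. The positive roots (`⟪f, α⟫ > 0`) that are not
sums of two positive roots are pairwise obtuse, hence linearly independent, and every positive
root is a nonnegative combination of them: they form a base `Δ`. Comparing coefficients shows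
that a simple reflection `ω_c` permutes the positive roots other than `c`, and descending along
`⟪f, ·⟫` every generator `ω_α` of the abstract group becomes a product of simple generators.

The map to `W` is onto by construction. For injectivity take a word `w ω_c` in the simple
generators that is trivial in `W`. Then `w` sends `c` to the negative root `-c`, so `w = p ω_d s`
where `s` sends `c` to a positive root that `ω_d` makes negative, which forces `s c = d`. The
relation `s ω_c s⁻¹ = ω_{s c} = ω_d` then deletes the letters `ω_d` and `ω_c`, and induction on
the length of the word finishes the proof.
-/

variable {V : Type*} [NormedAddCommGroup V] [InnerProductSpace ℝ V]

/-- The Cartan pairing `⟨β, α⟩ = 2(β,α)/(α,α)`. -/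
noncomputable def pairingR (β α : V) : ℝ := 2 * (inner ℝ β α : ℝ) / (inner ℝ α α : ℝ)

/-- The reflection in `α`, `v ↦ v − ⟨v,α⟩α` (junk value: the identity, if `α = 0`). -/
noncomputable def rfln (α : V) : V ≃ₗ[ℝ] V :=
  if h : (inner ℝ α α : ℝ) ≠ 0 then
    Module.reflection (f := (2 / (inner ℝ α α : ℝ)) • innerₛₗ ℝ α) (x := α)
      (by simp only [LinearMap.smul_apply, innerₛₗ_apply_apply, smul_eq_mul]; field_simp)
  else LinearEquiv.refl ℝ V

/-- `Φ` is a (reduced, crystallographic) root system. -/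
structure IsRootSystem (Φ : Finset V) : Prop where
  ne_zero : ∀ α ∈ Φ, α ≠ 0
  reduced : ∀ α ∈ Φ, ∀ t : ℝ, t • α ∈ Φ → t = 1 ∨ t = -1
  reflect : ∀ α ∈ Φ, ∀ β ∈ Φ, β - pairingR β α • α ∈ Φ
  crystal : ∀ α ∈ Φ, ∀ β ∈ Φ, ∃ n : ℤ, pairingR β α = (n : ℝ)

/-- `α` is a positive root with respect to the simple system `Δ`. -/
def IsPos (Φ Δ : Finset V) (α : V) : Prop :=
  α ∈ Φ ∧ ∃ c : V → ℝ, (∀ b, 0 ≤ c b) ∧ α = ∑ b ∈ Δ, c b • b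

/-- `Δ` is a base (set of simple roots) for `Φ`. -/
structure IsBase (Φ Δ : Finset V) : Prop where
  subset : Δ ⊆ Φ
  indep : LinearIndependent ℝ (fun b : ↥(Δ : Set V) => (b : V))
  pos_or_neg : ∀ α ∈ Φ, IsPos Φ Δ α ∨ IsPos Φ Δ (-α)

/-- The finset of positive roots. -/
noncomputable def posF (Φ Δ : Finset V) : Finset V :=
  @Finset.filter _ (IsPos Φ Δ) (Classical.decPred _) Φ

/-- The product of the reflections in the listed roots (the rightmost acts first). -/
noncomputable def wprod (l : List V) : V ≃ₗ[ℝ] V := (l.map rfln).prod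

open RealInnerProductSpace Finset

theorem rfln_apply (α v : V) : rfln α v = v - pairingR v α • α := by
  unfold rfln
  split_ifs with h
  · rw [Module.reflection_apply]
    simp only [LinearMap.smul_apply, innerₛₗ_apply_apply, smul_eq_mul, pairingR,
      real_inner_comm α v]
    ring_nf
  · obtain rfl : α = 0 := by simpa using h
    simp

theorem rfln_inv (α : V) : (rfln α)⁻¹ = rfln α := by
  unfold rfln
  split_ifs
  exacts [Module.reflection_inv _, inv_one]

theorem rfln_mul_self (α : V) : rfln α * rfln α = 1 := by
  nth_rw 1 [← rfln_inv]
  exact inv_mul_cancel _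

theorem rfln_rfln (α v : V) : rfln α (rfln α v) = v :=
  LinearEquiv.congr_fun (rfln_mul_self α) v

theorem pairingR_self {α : V} (h : α ≠ 0) : pairingR α α = 2 := by
  have : ⟪α, α⟫ ≠ 0 := inner_self_ne_zero.2 h
  unfold pairingR
  field_simp

theorem rfln_self (α : V) : rfln α α = -α := by
  rcases eq_or_ne α 0 with rfl | h
  · simp [rfln_apply]
  · rw [rfln_apply, pairingR_self h, two_smul]
    abel

theorem inner_rfln_rfln (α u v : V) : ⟪rfln α u, rfln α v⟫ = ⟪u, v⟫ := by
  rcases eq_or_ne α 0 with rfl | h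
  · simp [rfln_apply]
  have : ⟪α, α⟫ ≠ 0 := inner_self_ne_zero.2 h
  simp only [rfln_apply, pairingR, inner_sub_left, inner_sub_right, real_inner_smul_left,
    real_inner_smul_right, real_inner_comm α]
  field_simp
  ring

theorem pairingR_rfln_rfln (α u v : V) : pairingR (rfln α u) (rfln α v) = pairingR u v := by
  simp only [pairingR, inner_rfln_rfln]

theorem rfln_rfln_eq_conj (α β : V) : rfln (rfln α β) = rfln α * rfln β * (rfln α)⁻¹ := by
  ext v
  have h := pairingR_rfln_rfln α (rfln α v) β
  rw [rfln_rfln] at h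
  rw [rfln_inv, LinearEquiv.mul_apply, LinearEquiv.mul_apply, rfln_apply (rfln α β) v,
    rfln_apply β (rfln α v), map_sub, map_smul, rfln_rfln, h]

theorem exists_forall_inner_ne_zero {s : Finset V} (hs : ∀ α ∈ s, α ≠ 0) :
    ∃ f : V, ∀ α ∈ s, ⟪f, α⟫ ≠ 0 := by
  obtain ⟨f, hf⟩ := Module.Dual.exists_forall_ne_zero_of_forall_exists
    (fun α : s => innerₛₗ ℝ (α : V)) fun α => ⟨α, inner_self_ne_zero.2 (hs α α.2)⟩
  exact ⟨f, fun α hα => by simpa [real_inner_comm] using hf ⟨α, hα⟩⟩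

theorem inner_mul_inner_lt_of_ne_smul {α β : V} (hα : α ≠ 0) (h : ∀ t : ℝ, β ≠ t • α) :
    ⟪α, β⟫ * ⟪α, β⟫ < ⟪α, α⟫ * ⟪β, β⟫ := by
  have hαα : 0 < ⟪α, α⟫ := real_inner_self_pos.2 hα
  -- `⟪u, u⟫ = ⟪α, α⟫ (⟪α, α⟫ ⟪β, β⟫ - ⟪α, β⟫²)` for `u = ⟪α, α⟫ β - ⟪α, β⟫ α`
  have hu : ⟪α, α⟫ • β - ⟪α, β⟫ • α ≠ 0 := by
    rw [sub_ne_zero]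
    intro hu
    apply h (⟪α, β⟫ / ⟪α, α⟫)
    rw [div_eq_inv_mul, mul_smul, ← hu, inv_smul_smul₀ hαα.ne']
  have := real_inner_self_pos.2 hu
  simp only [inner_sub_left, inner_sub_right, real_inner_smul_left, real_inner_smul_right,
    real_inner_comm α β] at this
  nlinarith

theorem pairingR_mul_pairingR_lt_four {α β : V} (hα : α ≠ 0) (h : ∀ t : ℝ, β ≠ t • α) :
    pairingR β α * pairingR α β < 4 := by
  have hαα : 0 < ⟪α, α⟫ := real_inner_self_pos.2 hα
  have hββ : 0 < ⟪β, β⟫ := real_inner_self_pos.2 (by simpa using h 0)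
  unfold pairingR
  rw [real_inner_comm α β, div_mul_div_comm, div_lt_iff₀ (by positivity)]
  nlinarith [inner_mul_inner_lt_of_ne_smul hα h]

namespace IsRootSystem

variable {Φ : Finset V}

theorem rfln_mem (hΦ : IsRootSystem Φ) {α β : V} (hα : α ∈ Φ) (hβ : β ∈ Φ) : rfln α β ∈ Φ := by
  rw [rfln_apply]
  exact hΦ.reflect α hα β hβ

theorem neg_mem (hΦ : IsRootSystem Φ) {α : V} (hα : α ∈ Φ) : -α ∈ Φ :=
  rfln_self α ▸ hΦ.rfln_mem hα hα

theorem sub_mem_of_inner_pos (hΦ : IsRootSystem Φ) {α β : V} (hα : α ∈ Φ) (hβ : β ∈ Φ)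
    (hne : β ≠ α) (hne' : β ≠ -α) (hpos : 0 < ⟪α, β⟫) : α - β ∈ Φ := by
  have hα0 := hΦ.ne_zero α hα
  have hβ0 := hΦ.ne_zero β hβ
  have hnp : ∀ t : ℝ, β ≠ t • α := by
    rintro t rfl
    rcases hΦ.reduced α hα t hβ with rfl | rfl
    exacts [hne (one_smul ℝ α), hne' (neg_one_smul ℝ α)]
  obtain ⟨n, hn⟩ := hΦ.crystal α hα β hβ
  obtain ⟨m, hm⟩ := hΦ.crystal β hβ α hα
  have hαα : 0 < ⟪α, α⟫ := real_inner_self_pos.2 hα0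
  have hββ : 0 < ⟪β, β⟫ := real_inner_self_pos.2 hβ0
  have hn0 : (0 : ℝ) < n := hn ▸ by unfold pairingR; rw [real_inner_comm]; positivity
  have hm0 : (0 : ℝ) < m := hm ▸ by unfold pairingR; positivity
  have hnm : (n : ℝ) * m < 4 := hn ▸ hm ▸ pairingR_mul_pairingR_lt_four hα0 hnp
  have hn0' : 0 < n := by exact_mod_cast hn0
  have hm0' : 0 < m := by exact_mod_cast hm0
  have hnm' : n * m < 4 := by exact_mod_cast hnm
  obtain rfl | rfl : n = 1 ∨ m = 1 := by
    by_contra! h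
    nlinarith [show 2 ≤ n by omega, show 2 ≤ m by omega]
  · have := hΦ.neg_mem (hΦ.reflect α hα β hβ)
    rwa [hn, Int.cast_one, one_smul, neg_sub] at this
  · have := hΦ.reflect β hβ α hα
    rwa [hm, Int.cast_one, one_smul] at this

end IsRootSystem

theorem linearIndepOn_of_inner_nonpos {s : Finset V} {f : V} (hf : ∀ b ∈ s, 0 < ⟪f, b⟫)
    (hs : ∀ b ∈ s, ∀ b' ∈ s, b ≠ b' → ⟪b, b'⟫ ≤ 0) : LinearIndepOn ℝ id (s : Set V) := by
  have eq_zero_of_nonneg {c : V → ℝ} (hc : ∀ b, 0 ≤ c b) (h : ∑ b ∈ s, c b • b = 0) :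
      ∀ b ∈ s, c b = 0 := by
    have h' : ∑ b ∈ s, c b * ⟪f, b⟫ = 0 := by
      simpa [inner_sum, real_inner_smul_right] using congr_arg (⟪f, ·⟫) h
    intro b hb
    have := (sum_eq_zero_iff_of_nonneg fun b hb => mul_nonneg (hc b) (hf b hb).le).1 h' b hb
    exact (mul_eq_zero.1 this).resolve_right (hf b hb).ne'
  rw [linearIndepOn_finset_iff]
  intro t ht
  set v := ∑ b ∈ s, (t b)⁺ • b
  have hv : v = ∑ b ∈ s, (t b)⁻ • b := by
    rw [← sub_eq_zero, ← sum_sub_distrib]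
    simpa only [← sub_smul, posPart_sub_negPart, id] using ht
  -- `⟪v, v⟫ = ∑ t⁺ t⁻ ⟪b, b'⟫`, where the diagonal terms vanish and the others are `≤ 0`
  have hvv : ⟪v, v⟫ ≤ 0 := by
    calc ⟪v, v⟫ = ⟪v, ∑ b ∈ s, (t b)⁻ • b⟫ := by rw [hv]
      _ = ∑ b ∈ s, ∑ b' ∈ s, (t b)⁻ * ((t b')⁺ * ⟪b', b⟫) := by
          simp only [v, sum_inner, inner_sum, real_inner_smul_left, real_inner_smul_right]
      _ ≤ 0 := by
          refine sum_nonpos fun b hb => sum_nonpos fun b' hb' => ?_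
          rcases eq_or_ne b b' with rfl | hne
          · rcases le_total (t b) 0 with h | h <;> simp [h]
          · exact mul_nonpos_of_nonneg_of_nonpos (negPart_nonneg _)
              (mul_nonpos_of_nonneg_of_nonpos (posPart_nonneg _) (hs b' hb' b hb hne.symm))
  have hv0 : v = 0 := real_inner_self_nonpos.1 hvv
  intro b hb
  rw [← posPart_sub_negPart (t b), eq_zero_of_nonneg (fun _ => posPart_nonneg _) hv0 b hb,
    eq_zero_of_nonneg (fun _ => negPart_nonneg _) (hv ▸ hv0) b hb, sub_zero]

section Base

variable {Φ Δ : Finset V}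

theorem isPos_of_mem {c : V} (hcΦ : c ∈ Φ) (hc : c ∈ Δ) : IsPos Φ Δ c := by
  classical
  exact ⟨hcΦ, fun b => if b = c then 1 else 0, fun b => by positivity, by simp [hc]⟩

theorem IsPos.add {β γ : V} (hβ : IsPos Φ Δ β) (hγ : IsPos Φ Δ γ) (h : β + γ ∈ Φ) :
    IsPos Φ Δ (β + γ) := by
  obtain ⟨-, k, hk, rfl⟩ := hβ
  obtain ⟨-, e, he, rfl⟩ := hγ
  exact ⟨h, k + e, fun b => add_nonneg (hk b) (he b), by simp only [Pi.add_apply, add_smul,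
    sum_add_distrib]⟩

theorem IsPos.exists_inner_pos {α : V} (h : IsPos Φ Δ α) (h0 : α ≠ 0) :
    ∃ b ∈ Δ, 0 < ⟪α, b⟫ := by
  obtain ⟨-, k, hk, hks⟩ := h
  by_contra! hle
  refine h0 (real_inner_self_nonpos.1 ?_)
  nth_rw 2 [hks]
  rw [inner_sum]
  exact sum_nonpos fun b hb => by
    rw [real_inner_smul_right]
    exact mul_nonpos_of_nonneg_of_nonpos (hk b) (hle b hb)

namespace IsBase

theorem eq_zero_of_sum_smul_eq_zero (hΔ : IsBase Φ Δ) {t : V → ℝ}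
    (h : ∑ b ∈ Δ, t b • b = 0) : ∀ b ∈ Δ, t b = 0 :=
  linearIndepOn_finset_iff.1 (show LinearIndepOn ℝ id (Δ : Set V) from hΔ.indep) t h

theorem not_isPos_neg (hΔ : IsBase Φ Δ) {α : V} (h0 : α ≠ 0) (h : IsPos Φ Δ α) :
    ¬ IsPos Φ Δ (-α) := by
  rintro ⟨-, k', hk', hks'⟩
  obtain ⟨-, k, hk, rfl⟩ := h
  have hsum : ∑ b ∈ Δ, (k b + k' b) • b = 0 := by
    simp only [add_smul, sum_add_distrib, ← hks', add_neg_cancel]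
  have hzero := hΔ.eq_zero_of_sum_smul_eq_zero hsum
  refine h0 (sum_eq_zero fun b hb => ?_)
  rw [show k b = 0 by linarith [hk b, hk' b, hzero b hb], zero_smul]

theorem isPos_rfln (hΔ : IsBase Φ Δ) (hΦ : IsRootSystem Φ) {c β : V} (hc : c ∈ Δ)
    (hβ : IsPos Φ Δ β) (hne : β ≠ c) : IsPos Φ Δ (rfln c β) := by
  classical
  have hcΦ := hΔ.subset hc
  rcases hΔ.pos_or_neg _ (hΦ.rfln_mem hcΦ hβ.1) with h | ⟨-, e, he, hes⟩
  · exact h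
  exfalso
  obtain ⟨hβΦ, k, hk, hks⟩ := hβ
  -- comparing coefficients in `β + (-ω_c β) = ⟨β, c⟩ c`
  have hcoef := hΔ.eq_zero_of_sum_smul_eq_zero
    (t := fun b => k b + e b - if b = c then pairingR β c else 0) (by
      simp only [sub_smul, add_smul, sum_sub_distrib, sum_add_distrib, ite_smul, zero_smul,
        sum_ite_eq', if_pos hc, ← hks, ← hes, rfln_apply]
      abel)
  have hβc : β = k c • c := by
    rw [hks, sum_eq_single c (fun b hb hbc => ?_) (absurd hc)]
    have := hcoef b hb
    simp only [if_neg hbc, sub_zero] at this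
    rw [show k b = 0 by linarith [hk b, he b], zero_smul]
  rcases hΦ.reduced c hcΦ (k c) (hβc ▸ hβΦ) with h1 | h1
  · exact hne (by rw [hβc, h1, one_smul])
  · refine hΔ.not_isPos_neg (hΦ.ne_zero c hcΦ) (isPos_of_mem hcΦ hc) ?_
    rw [← neg_one_smul ℝ c, ← h1, ← hβc]
    exact ⟨hβΦ, k, hk, hks⟩

end IsBase

end Base

section SimpleRoots

variable {Φ : Finset V} {f : V}

-- The indecomposable positive roots for the regular vector `f` (Humphreys, §10.1).
open Classical in
noncomputable def simpleRoots (Φ : Finset V) (f : V) : Finset V :=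
  Φ.filter fun α => 0 < ⟪f, α⟫ ∧ ∀ β ∈ Φ, ∀ γ ∈ Φ, 0 < ⟪f, β⟫ → 0 < ⟪f, γ⟫ → β + γ ≠ α

open Classical in
theorem mem_simpleRoots {α : V} :
    α ∈ simpleRoots Φ f ↔
      α ∈ Φ ∧ 0 < ⟪f, α⟫ ∧ ∀ β ∈ Φ, ∀ γ ∈ Φ, 0 < ⟪f, β⟫ → 0 < ⟪f, γ⟫ → β + γ ≠ α :=
  mem_filter

theorem isPos_simpleRoots {α : V} (hα : α ∈ Φ) (hfα : 0 < ⟪f, α⟫) :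
    IsPos Φ (simpleRoots Φ f) α := by
  refine (Φ.finite_toSet.wellFoundedOn (r := fun a b => ⟪f, a⟫ < ⟪f, b⟫)).induction hα
    (P := fun α => 0 < ⟪f, α⟫ → IsPos Φ (simpleRoots Φ f) α) ?_ hfα
  intro α (hα : α ∈ Φ) ih hfα
  by_cases hs : α ∈ simpleRoots Φ f
  · exact isPos_of_mem hα hs
  obtain ⟨β, hβ, γ, hγ, hfβ, hfγ, rfl⟩ :
      ∃ β ∈ Φ, ∃ γ ∈ Φ, 0 < ⟪f, β⟫ ∧ 0 < ⟪f, γ⟫ ∧ β + γ = α := by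
    simpa [mem_simpleRoots, hα, hfα] using hs
  rw [inner_add_right] at hfα ih
  exact (ih β hβ (by simpa) hfβ).add (ih γ hγ (by simpa) hfγ) hα

theorem inner_nonpos_of_mem_simpleRoots (hΦ : IsRootSystem Φ) (hf : ∀ α ∈ Φ, ⟪f, α⟫ ≠ 0)
    {b b' : V} (hb : b ∈ simpleRoots Φ f) (hb' : b' ∈ simpleRoots Φ f) (hne : b ≠ b') :
    ⟪b, b'⟫ ≤ 0 := by
  obtain ⟨hbΦ, hfb, hb⟩ := mem_simpleRoots.1 hb
  obtain ⟨hb'Φ, hfb', hb'⟩ := mem_simpleRoots.1 hb'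
  by_contra! hpos
  have hne' : b' ≠ -b := by
    rintro rfl
    rw [inner_neg_right] at hfb'
    linarith
  have hsub := hΦ.sub_mem_of_inner_pos hbΦ hb'Φ hne.symm hne' hpos
  rcases (hf _ hsub).lt_or_gt with h | h
  · exact hb' _ (hΦ.neg_mem hsub) _ hbΦ (by rwa [inner_neg_right, neg_pos]) hfb (by abel)
  · exact hb _ hsub _ hb'Φ h hfb' (by abel)

theorem isBase_simpleRoots (hΦ : IsRootSystem Φ) (hf : ∀ α ∈ Φ, ⟪f, α⟫ ≠ 0) :
    IsBase Φ (simpleRoots Φ f) where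
  subset _ hα := (mem_simpleRoots.1 hα).1
  indep := linearIndepOn_of_inner_nonpos (fun _ hb => (mem_simpleRoots.1 hb).2.1)
    fun _ hb _ hb' => inner_nonpos_of_mem_simpleRoots hΦ hf hb hb'
  pos_or_neg α hα := (hf α hα).lt_or_gt.symm.imp (isPos_simpleRoots hα)
    fun h => isPos_simpleRoots (hΦ.neg_mem hα) (by rwa [inner_neg_right, neg_pos])

end SimpleRoots

theorem List.exists_eq_append_cons_of_not_prod_smul {ι M α : Type*} [Monoid M] [MulAction M α]
    (g : ι → M) {P : α → Prop} {x : α} (hx : P x) :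
    ∀ {l : List ι}, ¬ P ((l.map g).prod • x) →
      ∃ p d s, l = p ++ d :: s ∧ P ((s.map g).prod • x) ∧ ¬ P (g d • (s.map g).prod • x)
  | [], h => absurd (by simpa using hx) h
  | d :: s, h => by
    by_cases hs : P ((s.map g).prod • x)
    · exact ⟨[], d, s, rfl, hs, by simpa [mul_smul] using h⟩
    · obtain ⟨p, d', s', rfl, h1, h2⟩ := exists_eq_append_cons_of_not_prod_smul g hx hs
      exact ⟨d :: p, d', s', rfl, h1, h2⟩

section Presentation

variable {Φ : Finset V} {hmem : ∀ a b : {x // x ∈ Φ}, rfln (a : V) (b : V) ∈ Φ}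

variable (Φ hmem) in
def weylRels : Set (FreeGroup {x // x ∈ Φ}) :=
  {w : FreeGroup {x // x ∈ Φ} | ∃ a : {x // x ∈ Φ}, w = (FreeGroup.of a) ^ 2} ∪
    {w : FreeGroup {x // x ∈ Φ} | ∃ a b : {x // x ∈ Φ},
      w = FreeGroup.of a * FreeGroup.of b * (FreeGroup.of a)⁻¹ *
        (FreeGroup.of (⟨rfln (a : V) (b : V), hmem a b⟩ : {x // x ∈ Φ}))⁻¹}

variable (Φ hmem) in
abbrev WeylPresentation : Type _ := PresentedGroup (weylRels Φ hmem)

namespace WeylPresentation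

open PresentedGroup

theorem of_mul_of_self (a : {x // x ∈ Φ}) : (of a : WeylPresentation Φ hmem) * of a = 1 := by
  rw [← pow_two]
  exact one_of_mem (Or.inl ⟨a, rfl⟩)

theorem of_inv (a : {x // x ∈ Φ}) : (of a : WeylPresentation Φ hmem)⁻¹ = of a :=
  inv_eq_of_mul_eq_one_right (of_mul_of_self a)

theorem of_mul_of_mul_of (a b : {x // x ∈ Φ}) :
    (of a : WeylPresentation Φ hmem) * of b * of a = of ⟨rfln (a : V) b, hmem a b⟩ := by
  have h : (of a : WeylPresentation Φ hmem) * of b * (of a)⁻¹ *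
      (of ⟨rfln (a : V) b, hmem a b⟩)⁻¹ = 1 :=
    one_of_mem (Or.inr ⟨a, b, rfl⟩)
  rwa [of_inv, mul_inv_eq_one] at h

noncomputable def reflectionHom : WeylPresentation Φ hmem →* V ≃ₗ[ℝ] V :=
  toGroup (rels := weylRels Φ hmem) (f := fun a : {x // x ∈ Φ} => rfln (a : V)) <| by
    rintro _ (⟨a, rfl⟩ | ⟨a, b, rfl⟩)
    · simp [pow_two, rfln_mul_self]
    · simp [rfln_rfln_eq_conj]

theorem reflectionHom_of (a : {x // x ∈ Φ}) :
    reflectionHom (of a : WeylPresentation Φ hmem) = rfln (a : V) :=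
  toGroup.of _

theorem range_reflectionHom :
    (reflectionHom : WeylPresentation Φ hmem →* V ≃ₗ[ℝ] V).range =
      Subgroup.closure {w | ∃ α ∈ Φ, w = rfln α} := by
  rw [MonoidHom.range_eq_map, ← closure_range_of, MonoidHom.map_closure, ← Set.range_comp]
  congr 1
  ext w
  simp [reflectionHom_of, eq_comm]

theorem submonoid_closure_range_of :
    Submonoid.closure (Set.range (of : {x // x ∈ Φ} → WeylPresentation Φ hmem)) = ⊤ := by
  have hinv : (Set.range (of : {x // x ∈ Φ} → WeylPresentation Φ hmem))⁻¹ =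
      Set.range of := by
    ext x
    refine ⟨fun ⟨a, ha⟩ => ⟨a, ?_⟩, fun ⟨a, ha⟩ => ⟨a, ?_⟩⟩
    · rw [← of_inv, ha, inv_inv]
    · rw [← ha, of_inv]
  rw [← Subgroup.top_toSubmonoid, ← closure_range_of, Subgroup.closure_toSubmonoid, hinv,
    Set.union_self]

theorem mul_of_mul_inv_eq_of (g : WeylPresentation Φ hmem) {b c : {x // x ∈ Φ}}
    (h : reflectionHom g (b : V) = c) : g * of b * g⁻¹ = of c := by
  induction g using Submonoid.induction_of_closure_eq_top_left submonoid_closure_range_of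
    generalizing c with
  | one =>
    rw [map_one] at h
    rw [Subtype.ext h, one_mul, inv_one, mul_one]
  | mul_left x hx g ih =>
    obtain ⟨a, rfl⟩ := hx
    rw [map_mul, reflectionHom_of, LinearEquiv.mul_apply] at h
    have h' : reflectionHom g (b : V) = rfln (a : V) c := by rw [← h, rfln_rfln]
    calc of a * g * of b * (of a * g)⁻¹ = of a * (g * of b * g⁻¹) * of a := by
          rw [mul_inv_rev, of_inv]; group
      _ = of c := by
          rw [ih (c := ⟨_, hmem a c⟩) h', of_mul_of_mul_of]
          congr
          exact rfln_rfln _ _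

variable (hmem) in
def simpleGens (Δ : Finset V) : Set (WeylPresentation Φ hmem) :=
  of '' {a | (a : V) ∈ Δ}

end WeylPresentation

open PresentedGroup WeylPresentation

namespace IsBase

variable {Δ : Finset V}

theorem of_mem_closure_simpleGens (hΔ : IsBase Φ Δ) (hΦ : IsRootSystem Φ) {f : V}
    (hf : ∀ b ∈ Δ, 0 < ⟪f, b⟫) {α : V} (hα : IsPos Φ Δ α) :
    of ⟨α, hα.1⟩ ∈ Submonoid.closure (simpleGens hmem Δ) := by
  refine (Φ.finite_toSet.wellFoundedOn (r := fun a b => ⟪f, a⟫ < ⟪f, b⟫)).induction hα.1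
    (P := fun α => ∀ hα : IsPos Φ Δ α, of ⟨α, hα.1⟩ ∈ Submonoid.closure (simpleGens hmem Δ))
    ?_ hα
  intro α (hαΦ : α ∈ Φ) ih hα
  by_cases hαΔ : α ∈ Δ
  · exact Submonoid.subset_closure ⟨_, hαΔ, rfl⟩
  obtain ⟨b, hb, hαb⟩ := hα.exists_inner_pos (hΦ.ne_zero α hαΦ)
  have hbΦ := hΔ.subset hb
  have hα' : IsPos Φ Δ (rfln b α) := hΔ.isPos_rfln hΦ hb hα (by rintro rfl; exact hαΔ hb)
  have hlt : ⟪f, rfln b α⟫ < ⟪f, α⟫ := by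
    have : 0 < pairingR α b := by
      have := real_inner_self_pos.2 (hΦ.ne_zero b hbΦ)
      unfold pairingR
      positivity
    rw [rfln_apply, inner_sub_right, real_inner_smul_right]
    nlinarith [hf b hb]
  have hb' : of ⟨b, hbΦ⟩ ∈ Submonoid.closure (simpleGens hmem Δ) :=
    Submonoid.subset_closure ⟨_, hb, rfl⟩
  have hconj : (of ⟨α, hαΦ⟩ : WeylPresentation Φ hmem) =
      of ⟨b, hbΦ⟩ * of ⟨rfln b α, hα'.1⟩ * of ⟨b, hbΦ⟩ := by
    rw [of_mul_of_mul_of]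
    congr
    exact (rfln_rfln b α).symm
  rw [hconj]
  exact mul_mem (mul_mem hb' (ih _ hα'.1 hlt hα')) hb'

theorem closure_simpleGens_eq_top (hΔ : IsBase Φ Δ) (hΦ : IsRootSystem Φ) {f : V}
    (hf : ∀ b ∈ Δ, 0 < ⟪f, b⟫) : Submonoid.closure (simpleGens hmem Δ) = ⊤ := by
  rw [eq_top_iff, ← submonoid_closure_range_of, Submonoid.closure_le]
  rintro _ ⟨a, rfl⟩
  rcases hΔ.pos_or_neg a a.2 with h | h
  · exact hΔ.of_mem_closure_simpleGens hΦ hf h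
  · have hneg : (of a : WeylPresentation Φ hmem) = of ⟨-(a : V), h.1⟩ :=
      calc of a = of a * of a * of a := by rw [of_mul_of_self, one_mul]
        _ = of ⟨-(a : V), h.1⟩ := by
          rw [of_mul_of_mul_of]
          congr
          exact rfln_self _
    exact hneg ▸ hΔ.of_mem_closure_simpleGens hΦ hf h

theorem prod_eq_one_of_reflectionHom_eq_one (hΔ : IsBase Φ Δ) (hΦ : IsRootSystem Φ)
    {l : List (WeylPresentation Φ hmem)} (hl : ∀ x ∈ l, x ∈ simpleGens hmem Δ)
    (h1 : reflectionHom l.prod = 1) : l.prod = 1 := by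
  induction hn : l.length using Nat.strong_induction_on generalizing l with
  | _ n ih =>
    rcases l.eq_nil_or_concat' with rfl | ⟨t, x, rfl⟩
    · rfl
    obtain ⟨c, hc, rfl⟩ := hl x (by simp)
    have hcΦ := hΔ.subset hc
    have ht : ∀ y ∈ t, y ∈ simpleGens hmem Δ := fun y hy => hl y (by simp [hy])
    rw [List.prod_append, List.prod_singleton] at h1 ⊢
    have hneg : ¬ IsPos Φ Δ ((t.map reflectionHom).prod • (c : V)) := by
      rw [map_mul, reflectionHom_of, mul_eq_one_iff_eq_inv, rfln_inv] at h1
      rw [← map_list_prod, LinearEquiv.smul_def, h1, rfln_self]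
      exact hΔ.not_isPos_neg (hΦ.ne_zero _ hcΦ) (isPos_of_mem hcΦ hc)
    obtain ⟨p, y, s, rfl, hs, hys⟩ :=
      List.exists_eq_append_cons_of_not_prod_smul _ (isPos_of_mem hcΦ hc) hneg
    obtain ⟨d, hd, rfl⟩ := ht y (by simp)
    rw [← map_list_prod, LinearEquiv.smul_def] at hs hys
    rw [LinearEquiv.smul_def, reflectionHom_of] at hys
    have hsc : reflectionHom s.prod (c : V) = d :=
      by_contra fun hne => hys (hΔ.isPos_rfln hΦ hd hs hne)
    -- `s ω_c s⁻¹ = ω_{s c} = ω_d`, so the letters `ω_d` and `ω_c` cancel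
    have hcancel : (p ++ of d :: s).prod * of c = (p ++ s).prod := by
      rw [← mul_of_mul_inv_eq_of s.prod hsc]
      simp only [List.prod_append, List.prod_cons]
      calc p.prod * (s.prod * of c * s.prod⁻¹ * s.prod) * of c
          = (p.prod * s.prod) * (of c * of c) := by group
        _ = (p.prod * s.prod) := by rw [of_mul_of_self, mul_one]
    rw [hcancel] at h1 ⊢
    refine ih _ ?_ (fun z hz => ?_) h1 rfl
    · simp only [← hn, List.length_append, List.length_cons]
      omega
    · rcases List.mem_append.1 hz with hz | hz <;> exact ht z (by simp [hz])

theorem injective_reflectionHom (hΔ : IsBase Φ Δ) (hΦ : IsRootSystem Φ) {f : V}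
    (hf : ∀ b ∈ Δ, 0 < ⟪f, b⟫) :
    Function.Injective (reflectionHom : WeylPresentation Φ hmem →* V ≃ₗ[ℝ] V) := by
  rw [injective_iff_map_eq_one]
  intro g hg
  obtain ⟨l, hl, rfl⟩ := Submonoid.exists_list_of_mem_closure
    (hΔ.closure_simpleGens_eq_top hΦ hf ▸ Submonoid.mem_top g)
  exact hΔ.prod_eq_one_of_reflectionHom_eq_one hΦ hl hg

end IsBase

end Presentation

/-- The Weyl group of a root system `Φ` (the group generated by the reflections
`ω_α`, `α ∈ Φ`) is isomorphic to the abstract group generated by symbols `ω_α`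
for `α ∈ Φ` subject to the relations `ω_α² = 1` and
`ω_α ω_β ω_α⁻¹ = ω_{ω_α(β)}`, where `ω_α(β) = β − ⟨β,α⟩α`. -/
theorem stmt3 (Φ : Finset V) (hΦ : IsRootSystem Φ)
    (hmem : ∀ a b : {x // x ∈ Φ}, rfln (a : V) (b : V) ∈ Φ) :
    Nonempty
      ((Subgroup.closure {w : V ≃ₗ[ℝ] V | ∃ α ∈ Φ, w = rfln α}) ≃*
        PresentedGroup
          ({w : FreeGroup {x // x ∈ Φ} | ∃ a : {x // x ∈ Φ}, w = (FreeGroup.of a) ^ 2} ∪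
           {w : FreeGroup {x // x ∈ Φ} | ∃ a b : {x // x ∈ Φ},
             w = FreeGroup.of a * FreeGroup.of b * (FreeGroup.of a)⁻¹ *
               (FreeGroup.of (⟨rfln (a : V) (b : V), hmem a b⟩ : {x // x ∈ Φ}))⁻¹})) := by
  obtain ⟨f, hf⟩ := exists_forall_inner_ne_zero hΦ.ne_zero
  have hinj := (isBase_simpleRoots hΦ hf).injective_reflectionHom (hmem := hmem) hΦ
    fun _ hb => (mem_simpleRoots.1 hb).2.1
  exact ⟨((MonoidHom.ofInjective hinj).trans
    (MulEquiv.subgroupCongr WeylPresentation.range_reflectionHom)).symm⟩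
end

section
/- Let G be a group with subgroups B and N forming a BN-pair (Tits system) with Weyl group W = N/(B∩N) generated by the set S of simple reflections. Then G admits the Bruhat decomposition: G is the disjoint union over w ∈ W of the double cosets B·ẇ·B, where ẇ ∈ N is any representative of w; moreover BẇB = Bẇ'B if and only if w = w' in W. -/
variable {G : Type*} [Group G]

/-- The `(B,B)`-double coset of `g`. -/
def DC (B : Subgroup G) (g : G) : Set G := {x | ∃ b ∈ B, ∃ b' ∈ B, x = b * g * b'}

/-- The hypotheses of a Tits system (BN-pair): `B` and `N` generate `G`,
`H = B ⊓ N` is normal in `N`, the Weyl group `W = N/H` is generated by the set `S`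
of involutions, `sBw ⊆ BswB ∪ BwB`, and `sBs ≠ B` for `s ∈ S`. -/
structure IsBNPair (B N : Subgroup G) (S : Set G) : Prop where
  gen : Subgroup.closure ((B : Set G) ∪ (N : Set G)) = ⊤
  hnorm : ∀ n ∈ N, ∀ h ∈ B ⊓ N, n * h * n⁻¹ ∈ B ⊓ N
  s_mem : S ⊆ (N : Set G)
  s_sq : ∀ s ∈ S, s * s ∈ B ⊓ N
  s_ne : ∀ s ∈ S, s ∉ B
  w_gen : (N : Set G) ⊆ ↑(Subgroup.closure (S ∪ (↑(B ⊓ N) : Set G)))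
  t3 : ∀ s ∈ S, ∀ n ∈ N, ∀ b ∈ B, s * b * n ∈ DC B (s * n) ∪ DC B n
  t4 : ∀ s ∈ S, ∃ b ∈ B, s * b * s⁻¹ ∉ B

/-!
Existence: the union of the double cosets `BnB`, `n ∈ N`, is stable under left multiplication
by `B` and, by axiom `t3`, by every `s ∈ S` and `s⁻¹ = (ss)⁻¹ s`; as `S ∪ B ⊓ N` generates `N`
and `B ∪ N` generates `G`, it is all of `G`.

Uniqueness: write `n = s m` with `m` a shorter word in `S` and let `BnB = Bn'B`, where `n'` has
no shorter word than `n`. Then `m ∈ s⁻¹Bn'B ⊆ Bsn'B ∪ Bn'B`; by induction `BmB = Bn'B` would make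
`n'` shorter than `n`, so `BmB = Bsn'B` and `m ≡ sn'`, i.e. `n ≡ n'` modulo `B ⊓ N`.
-/

open DoubleCoset
open scoped Pointwise

section DoubleCosets

variable {B : Subgroup G} {g x : G}

lemma DC_eq_doubleCoset (B : Subgroup G) (g : G) : DC B g = doubleCoset g B B := by
  ext x
  exact mem_doubleCoset.symm

lemma mem_DC_self (B : Subgroup G) (g : G) : g ∈ DC B g := by
  rw [DC_eq_doubleCoset]
  exact mem_doubleCoset_self B B g

lemma DC_eq_of_mem (hx : x ∈ DC B g) : DC B x = DC B g := by
  simp only [DC_eq_doubleCoset] at *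
  exact doubleCoset_eq_of_mem hx

lemma DC_eq_of_inv_mul_mem {n n' : G} (hnn' : n⁻¹ * n' ∈ B) :
    DC B n = DC B n' :=
  (DC_eq_of_mem ⟨1, one_mem _, n⁻¹ * n', hnn', by group⟩).symm

lemma mul_mul_mem_DC {b b' : G} (hb : b ∈ B) (hb' : b' ∈ B) (hx : x ∈ DC B g) :
    b * x * b' ∈ DC B g := by
  obtain ⟨c, hc, c', hc', rfl⟩ := hx
  exact ⟨b * c, mul_mem hb hc, c' * b', mul_mem hc' hb', by group⟩

lemma exists_mem_DC_mul_of_mem_B {N : Subgroup G} {b : G} (hb : b ∈ B)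
    (hx : ∃ n ∈ N, x ∈ DC B n) : ∃ n ∈ N, b * x ∈ DC B n := by
  obtain ⟨n, hn, hx⟩ := hx
  exact ⟨n, hn, by simpa using mul_mul_mem_DC hb (one_mem _) hx⟩

lemma mem_of_mem_DC (hg : g ∈ B) (hx : x ∈ DC B g) : x ∈ B := by
  obtain ⟨b, hb, b', hb', rfl⟩ := hx
  exact mul_mem (mul_mem hb hg) hb'

end DoubleCosets

section Words

def wordSet (S : Set G) (H : Subgroup G) : ℕ → Set G
  | 0 => H
  | k + 1 => S * wordSet S H k

variable {S : Set G} {H : Subgroup G}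

lemma wordSet_subset {K : Subgroup G} (hS : S ⊆ K) (hH : H ≤ K) :
    ∀ k, wordSet S H k ⊆ K
  | 0 => hH
  | k + 1 => by
    rintro _ ⟨s, hs, y, hy, rfl⟩
    exact mul_mem (hS hs) (wordSet_subset hS hH k hy)

lemma mul_mem_wordSet_succ {s x : G} {k : ℕ} (hs : s ∈ S) (hx : x ∈ wordSet S H k) :
    s * x ∈ wordSet S H (k + 1) :=
  Set.mul_mem_mul hs hx

variable (hconj : ∀ s ∈ S, ∀ t ∈ H, s⁻¹ * t * s ∈ H)
include hconj

lemma mul_mem_wordSet_of_mem_left {t : G} (ht : t ∈ H) :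
    ∀ {k x}, x ∈ wordSet S H k → t * x ∈ wordSet S H k
  | 0, _, hx => mul_mem ht hx
  | k + 1, _, ⟨s, hs, y, hy, hsy⟩ => by
    rw [← hsy, show t * (s * y) = s * ((s⁻¹ * t * s) * y) by group]
    exact mul_mem_wordSet_succ hs (mul_mem_wordSet_of_mem_left (hconj s hs t ht) hy)

lemma mul_mem_wordSet {y : G} {j : ℕ} (hy : y ∈ wordSet S H j) :
    ∀ {k x}, x ∈ wordSet S H k → x * y ∈ wordSet S H (k + j)
  | 0, _, hx => by
    rw [zero_add]
    exact mul_mem_wordSet_of_mem_left hconj hx hy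
  | k + 1, _, ⟨s, hs, x, hx, hsx⟩ => by
    rw [← hsx, mul_assoc, Nat.add_right_comm]
    exact mul_mem_wordSet_succ hs (mul_mem_wordSet hy hx)

lemma inv_mul_mem_wordSet_succ (hsq : ∀ s ∈ S, s * s ∈ H) {s x : G} {k : ℕ} (hs : s ∈ S)
    (hx : x ∈ wordSet S H k) : s⁻¹ * x ∈ wordSet S H (k + 1) := by
  rw [show s⁻¹ * x = s * ((s * s)⁻¹ * x) by group]
  exact mul_mem_wordSet_succ hs (mul_mem_wordSet_of_mem_left hconj (inv_mem (hsq s hs)) hx)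

lemma exists_mem_wordSet (hsq : ∀ s ∈ S, s * s ∈ H) {x : G}
    (hx : x ∈ Subgroup.closure (S ∪ H)) : ∃ k, x ∈ wordSet S H k := by
  have hone : (1 : G) ∈ wordSet S H 0 := H.one_mem
  induction hx using Subgroup.closure_induction'' with
  | mem x hx =>
    rcases hx with hx | hx
    · exact ⟨1, by simpa using mul_mem_wordSet_succ hx hone⟩
    · exact ⟨0, hx⟩
  | inv_mem x hx =>
    rcases hx with hx | hx
    · exact ⟨1, by simpa using inv_mul_mem_wordSet_succ hconj hsq hx hone⟩
    · exact ⟨0, inv_mem (show x ∈ H from hx)⟩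
  | one => exact ⟨0, hone⟩
  | mul x y _ _ hx hy =>
    obtain ⟨k, hx⟩ := hx
    obtain ⟨j, hy⟩ := hy
    exact ⟨k + j, mul_mem_wordSet hconj hy hx⟩

end Words

namespace IsBNPair

variable {B N : Subgroup G} {S : Set G} (h : IsBNPair B N S)
include h

lemma inv_mul_mul_mem : ∀ s ∈ S, ∀ t ∈ B ⊓ N, s⁻¹ * t * s ∈ B ⊓ N := fun s hs t ht => by
  simpa using h.hnorm s⁻¹ (inv_mem (h.s_mem hs)) t ht

lemma wordSet_subset_N (k : ℕ) : wordSet S (B ⊓ N) k ⊆ N :=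
  wordSet_subset h.s_mem inf_le_right k

lemma exists_mem_wordSet {n : G} (hn : n ∈ N) : ∃ k, n ∈ wordSet S (B ⊓ N) k :=
  _root_.exists_mem_wordSet h.inv_mul_mul_mem h.s_sq (h.w_gen hn)

lemma mul_mem_DC_union {s n x : G} (hs : s ∈ S) (hn : n ∈ N) (hx : x ∈ DC B n) :
    s * x ∈ DC B (s * n) ∪ DC B n := by
  obtain ⟨b, hb, b', hb', rfl⟩ := hx
  rw [show s * (b * n * b') = 1 * (s * b * n) * b' by group]
  exact (h.t3 s hs n hn b hb).imp (mul_mul_mem_DC (one_mem _) hb') (mul_mul_mem_DC (one_mem _) hb')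

lemma inv_mul_mem_DC_union {s n x : G} (hs : s ∈ S) (hn : n ∈ N) (hx : x ∈ DC B n) :
    s⁻¹ * x ∈ DC B (s * n) ∪ DC B n := by
  have hss : (s * s)⁻¹ ∈ B := inv_mem (h.s_sq s hs).1
  rw [show s⁻¹ * x = (s * s)⁻¹ * (s * x) * 1 by group]
  exact (h.mul_mem_DC_union hs hn hx).imp (mul_mul_mem_DC hss (one_mem _))
    (mul_mul_mem_DC hss (one_mem _))

lemma exists_mem_DC_mul_of_mem_S {s x : G} (hs : s ∈ S) (hx : ∃ n ∈ N, x ∈ DC B n) :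
    ∃ n ∈ N, s * x ∈ DC B n := by
  obtain ⟨n, hn, hx⟩ := hx
  exact (h.mul_mem_DC_union hs hn hx).elim (⟨_, mul_mem (h.s_mem hs) hn, ·⟩) (⟨_, hn, ·⟩)

lemma exists_mem_DC_inv_mul_of_mem_S {s x : G} (hs : s ∈ S) (hx : ∃ n ∈ N, x ∈ DC B n) :
    ∃ n ∈ N, s⁻¹ * x ∈ DC B n := by
  obtain ⟨n, hn, hx⟩ := hx
  exact (h.inv_mul_mem_DC_union hs hn hx).elim (⟨_, mul_mem (h.s_mem hs) hn, ·⟩) (⟨_, hn, ·⟩)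

lemma exists_mem_DC_mul_of_mem_N {g x : G} (hg : g ∈ N) (hx : ∃ n ∈ N, x ∈ DC B n) :
    ∃ n ∈ N, g * x ∈ DC B n := by
  replace hg := h.w_gen hg
  induction hg using Subgroup.closure_induction'' generalizing x with
  | mem g hg =>
    exact hg.elim (h.exists_mem_DC_mul_of_mem_S · hx) (exists_mem_DC_mul_of_mem_B ·.1 hx)
  | inv_mem g hg =>
    exact hg.elim (h.exists_mem_DC_inv_mul_of_mem_S · hx)
      fun ht => exists_mem_DC_mul_of_mem_B (inv_mem ht.1) hx
  | one => simpa using hx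
  | mul g g' _ _ ihg ihg' => simpa [mul_assoc] using ihg (ihg' hx)

lemma exists_mem_DC_mul (g : G) {x : G} (hx : ∃ n ∈ N, x ∈ DC B n) :
    ∃ n ∈ N, g * x ∈ DC B n := by
  have hg : g ∈ Subgroup.closure ((B : Set G) ∪ N) := h.gen ▸ Subgroup.mem_top g
  induction hg using Subgroup.closure_induction'' generalizing x with
  | mem g hg =>
    exact hg.elim (exists_mem_DC_mul_of_mem_B · hx) (h.exists_mem_DC_mul_of_mem_N · hx)
  | inv_mem g hg =>
    exact hg.elim (fun hb => exists_mem_DC_mul_of_mem_B (inv_mem hb) hx)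
      fun hn => h.exists_mem_DC_mul_of_mem_N (inv_mem hn) hx
  | one => simpa using hx
  | mul g g' _ _ ihg ihg' => simpa [mul_assoc] using ihg (ihg' hx)

lemma exists_mem_DC (g : G) : ∃ n ∈ N, g ∈ DC B n := by
  simpa using h.exists_mem_DC_mul g ⟨1, one_mem _, mem_DC_self B 1⟩

lemma inv_mul_mem_of_DC_eq_of_mem_wordSet :
    ∀ k {n n' : G}, n ∈ wordSet S (B ⊓ N) k → n' ∈ N →
      (∀ j < k, n' ∉ wordSet S (B ⊓ N) j) → DC B n = DC B n' → n⁻¹ * n' ∈ B ⊓ N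
  | 0, n, n', hn, hn', _, hDC => by
    have hn'B : n' ∈ B := mem_of_mem_DC hn.1 (hDC ▸ mem_DC_self B n')
    exact mul_mem (inv_mem hn) ⟨hn'B, hn'⟩
  | k + 1, _, n', ⟨s, hs, m, hm, rfl⟩, hn', hshort, hDC => by
    have hmN : m ∈ N := h.wordSet_subset_N k hm
    have hmem : m ∈ DC B (s * n') ∪ DC B n' := by
      have := h.inv_mul_mem_DC_union hs hn' (hDC ▸ mem_DC_self B (s * m))
      rwa [inv_mul_cancel_left] at this
    rcases hmem with hmem | hmem
    · have hshort' : ∀ j < k, s * n' ∉ wordSet S (B ⊓ N) j := fun j hj hsn' =>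
        hshort (j + 1) (by omega) (by
          simpa using inv_mul_mem_wordSet_succ h.inv_mul_mul_mem h.s_sq hs hsn')
      have hmsn' := inv_mul_mem_of_DC_eq_of_mem_wordSet k hm (mul_mem (h.s_mem hs) hn')
        hshort' (DC_eq_of_mem hmem)
      have hconj : m⁻¹ * (s * s)⁻¹ * m ∈ B ⊓ N := by
        simpa using h.hnorm m⁻¹ (inv_mem hmN) _ (inv_mem (h.s_sq s hs))
      rw [show (s * m)⁻¹ * n' = m⁻¹ * (s * s)⁻¹ * m * (m⁻¹ * (s * n')) by group]
      exact mul_mem hconj hmsn'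
    · -- `n' = m (m⁻¹ n')` would be a word of length `k`
      have hmn' := inv_mul_mem_of_DC_eq_of_mem_wordSet k hm hn'
        (fun j hj => hshort j (by omega)) (DC_eq_of_mem hmem)
      have := mul_mem_wordSet h.inv_mul_mul_mem (show m⁻¹ * n' ∈ wordSet S (B ⊓ N) 0 from hmn') hm
      exact absurd (by simpa using this) (hshort k (by omega))

lemma inv_mul_mem_of_DC_eq {n n' : G} (hn : n ∈ N) (hn' : n' ∈ N) (hDC : DC B n = DC B n') :
    n⁻¹ * n' ∈ B ⊓ N := by
  classical
  have hex : ∃ k, n ∈ wordSet S (B ⊓ N) k ∨ n' ∈ wordSet S (B ⊓ N) k :=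
    (h.exists_mem_wordSet hn).imp fun _ => Or.inl
  have hmin := fun j (hj : j < Nat.find hex) => not_or.mp (Nat.find_min hex hj)
  rcases Nat.find_spec hex with hk | hk
  · exact h.inv_mul_mem_of_DC_eq_of_mem_wordSet _ hk hn' (fun j hj => (hmin j hj).2) hDC
  · simpa using inv_mem <|
      h.inv_mul_mem_of_DC_eq_of_mem_wordSet _ hk hn (fun j hj => (hmin j hj).1) hDC.symm

end IsBNPair

/-- Bruhat decomposition for a group with a BN-pair: `G` is the union of the
double cosets `BẇB` over `w ∈ W = N/H`, and `BẇB = Bẇ'B` iff `w = w'` in `W`. -/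
theorem stmt13 (B N : Subgroup G) (S : Set G) (h : IsBNPair B N S) :
    (∀ g : G, ∃ n ∈ N, g ∈ DC B n) ∧
    (∀ n ∈ N, ∀ n' ∈ N, (DC B n = DC B n' ↔ n⁻¹ * n' ∈ B ⊓ N)) :=
  ⟨h.exists_mem_DC, fun _ hn _ hn' =>
    ⟨h.inv_mul_mem_of_DC_eq hn hn', fun hH => DC_eq_of_inv_mul_mem hH.1⟩⟩
end
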